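/- Equip ℝ⁶, with coordinates (v₀,v₁,v₂,v₃,v₄,v₅), with the Poisson bracket of smooth functions determined by the bivector Λ = v₀ ∂₁∧∂₂ − v₁ ∂₁∧∂₃ − v₂ ∂₁∧∂₅ + v₂ ∂₂∧∂₃ − v₁ ∂₂∧∂₄ + 2v₄ ∂₃∧∂₄ − 2v₅ ∂₃∧∂₅ + v₃ ∂₄∧∂₅ (where ∂ᵢ = ∂/∂vᵢ), i.e. the bracket with {v₁,v₂} = v₀, {v₁,v₃} = −v₁, {v₁,v₄} = 0, {v₁,v₅} = −v₂, {v₂,v₃} = v₂, {v₂,v₄} = −v₁, {v₂,v₅} = 0, {v₃,v₄} = 2v₄, {v₃,v₅} = −2v₅, {v₄,v₅} = v₃, and v₀ central. Then the cubic polynomial C₃ = 2(v₁²v₅ − v₂²v₄ − v₁v₂v₃) − v₀(v₃² + 4v₄v₅) is a Casimir function: {C₃, vᵢ} = 0 for all i = 0,…,5. -/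

import Mathlib

/-- Partial derivative of `f : ℝ⁶ → ℝ` at `p` in the `i`-th coordinate direction. -/
noncomputable def pd6 (f : (Fin 6 → ℝ) → ℝ) (p : Fin 6 → ℝ) (i : Fin 6) : ℝ :=
  fderiv ℝ f p (Pi.single i 1)

/-- The Lie–Poisson bracket on (the dual of) the two-photon algebra h₆, given by the
bivector `Λ = v₀ ∂₁∧∂₂ − v₁ ∂₁∧∂₃ − v₂ ∂₁∧∂₅ + v₂ ∂₂∧∂₃ − v₁ ∂₂∧∂₄ + 2v₄ ∂₃∧∂₄
− 2v₅ ∂₃∧∂₅ + v₃ ∂₄∧∂₅`. -/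
noncomputable def pbH6 (f g : (Fin 6 → ℝ) → ℝ) (p : Fin 6 → ℝ) : ℝ :=
  p 0 * (pd6 f p 1 * pd6 g p 2 - pd6 f p 2 * pd6 g p 1)
    - p 1 * (pd6 f p 1 * pd6 g p 3 - pd6 f p 3 * pd6 g p 1)
    - p 2 * (pd6 f p 1 * pd6 g p 5 - pd6 f p 5 * pd6 g p 1)
    + p 2 * (pd6 f p 2 * pd6 g p 3 - pd6 f p 3 * pd6 g p 2)
    - p 1 * (pd6 f p 2 * pd6 g p 4 - pd6 f p 4 * pd6 g p 2)
    + 2 * p 4 * (pd6 f p 3 * pd6 g p 4 - pd6 f p 4 * pd6 g p 3)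
    - 2 * p 5 * (pd6 f p 3 * pd6 g p 5 - pd6 f p 5 * pd6 g p 3)
    + p 3 * (pd6 f p 4 * pd6 g p 5 - pd6 f p 5 * pd6 g p 4)

/-- The cubic polynomial `C₃ = 2(v₁²v₅ − v₂²v₄ − v₁v₂v₃) − v₀(v₃² + 4v₄v₅)`. -/
noncomputable def C3 (v : Fin 6 → ℝ) : ℝ :=
  2 * ((v 1) ^ 2 * v 5 - (v 2) ^ 2 * v 4 - v 1 * v 2 * v 3)
    - v 0 * ((v 3) ^ 2 + 4 * v 4 * v 5)

lemma pd6_coord (p : Fin 6 → ℝ) (i j : Fin 6) :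
    pd6 (fun v => v i) p j = if j = i then 1 else 0 := by
  have h := (hasFDerivAt_apply (𝕜 := ℝ) i p).fderiv
  simp [pd6, h, Pi.single_apply, eq_comm]

lemma hasFDerivAt_sq {f : (Fin 6 → ℝ) → ℝ} {f' : (Fin 6 → ℝ) →L[ℝ] ℝ} {x : Fin 6 → ℝ}
    (h : HasFDerivAt f f' x) :
    HasFDerivAt (fun y => f y ^ 2) (f x • f' + f x • f') x := by
  have := h.mul h
  simp only [pow_two]
  exact this

lemma pd6_C3 (p : Fin 6 → ℝ) (j : Fin 6) :
    pd6 C3 p j =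
      (-(p 3 ^ 2 + 4 * p 4 * p 5)) * ((Pi.single j 1 : Fin 6 → ℝ) 0)
      + (2 * (2 * p 1 * p 5 - p 2 * p 3)) * ((Pi.single j 1 : Fin 6 → ℝ) 1)
      + (2 * (-2 * p 2 * p 4 - p 1 * p 3)) * ((Pi.single j 1 : Fin 6 → ℝ) 2)
      + (-2 * p 1 * p 2 - 2 * p 0 * p 3) * ((Pi.single j 1 : Fin 6 → ℝ) 3)
      + (-2 * p 2 ^ 2 - 4 * p 0 * p 5) * ((Pi.single j 1 : Fin 6 → ℝ) 4)
      + (2 * p 1 ^ 2 - 4 * p 0 * p 4) * ((Pi.single j 1 : Fin 6 → ℝ) 5) := by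
  have h0 := hasFDerivAt_apply (𝕜 := ℝ) (0 : Fin 6) p
  have h1 := hasFDerivAt_apply (𝕜 := ℝ) (1 : Fin 6) p
  have h2 := hasFDerivAt_apply (𝕜 := ℝ) (2 : Fin 6) p
  have h3 := hasFDerivAt_apply (𝕜 := ℝ) (3 : Fin 6) p
  have h4 := hasFDerivAt_apply (𝕜 := ℝ) (4 : Fin 6) p
  have h5 := hasFDerivAt_apply (𝕜 := ℝ) (5 : Fin 6) p
  have H := (((((hasFDerivAt_sq h1).mul h5).sub ((hasFDerivAt_sq h2).mul h4)).sub
      ((h1.mul h2).mul h3)).const_mul 2).sub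
      (h0.mul ((hasFDerivAt_sq h3).add ((h4.const_mul 4).mul h5)))
  have hf : fderiv ℝ C3 p = _ := H.fderiv
  simp only [pd6, hf]
  simp [ContinuousLinearMap.proj, Pi.single_apply]
  fin_cases j <;> simp +decide <;> ring

/-- `C₃` is a Casimir function of the two-photon Lie–Poisson bracket:
`{C₃, vᵢ} = 0` for every coordinate function `vᵢ`. -/
theorem twoPhoton_cubic_casimir :
    ∀ (p : Fin 6 → ℝ) (i : Fin 6), pbH6 C3 (fun v => v i) p = 0 := by
  intro p i
  simp only [pbH6, pd6_coord, pd6_C3]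
  fin_cases i <;> simp +decide [Pi.single_apply] <;> ring
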